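/- arXiv:1607.04841 — 5 statements merged into one kernel-verified Lean document; each statement's English description precedes it below -/
import Mathlib

section
/- In the t-BMW algebra, for |i-j|=1 one has f_i f_j f_i = e_j h_i e_j. -/
theorem tBMW_fff_general {A : Type*} [Ring A]
    (hi hj ei ej fi fj : A)
    (hff : fi * fj = ej * hi * hj * ei)
    (hef : ei * fi = fi)
    (hhf : hj * fi = hj * hi * ej)
    (hhh : hi * hj * hi = hi) :
    fi * fj * fi = ej * hi * ej :=
  calc fi * fj * fi = ej * hi * hj * (ei * fi) := by rw [hff]; simp only [mul_assoc]
    _ = ej * hi * (hj * fi) := by rw [hef]; simp only [mul_assoc]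
    _ = ej * (hi * hj * hi) * ej := by rw [hhf]; simp only [mul_assoc]
    _ = ej * hi * ej := by rw [hhh]

/-- In the t-BMW algebra, for `|i-j| = 1` one has `f_i f_j f_i = e_j h_i e_j`. -/
theorem tBMW_fff {A : Type*} [Ring A]
    (hi hj ei ej fi fj : A)
    (hff : fi * fj = ej * hi * hj * ei)
    (hef : ei * fi = fi) (hfe : fi * ei = fi)
    (hhf : hj * fi = hj * hi * ej)
    (hhh : hi * hj * hi = hi) :
    fi * fj * fi = ej * hi * ej :=
  tBMW_fff_general hi hj ei ej fi fj hff hef hhf hhh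
end

section
/- In the t-BMW algebra K_{n+1}, one has h_n f_{n-1} g_n = h_n f_{n-1} g_n e_n = h_n e_{n-1} g_{n-1}^{-1}. -/
/-! Everything reduces to `h_n g_{n-1}⁻¹ e_n`, obtained from `h_n f_{n-1} g_n` by commuting `e_n`
past `g_n` and applying `h_n h_{n-1} g_n = h_n g_{n-1}⁻¹`. -/

theorem tBMW_reductions2_i_general {A : Type*} [Ring A]
    (gmInv gn hm hn em en fm : A)
    (hhf : hn * fm = hn * hm * en)
    (heg : en * gn = gn * en)
    (hhhg : hn * hm * gn = hn * gmInv)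
    (hhen : hn * en = hn)
    (hege : en * gmInv * en = en * em * gmInv)
    (hee : en * en = en) :
    hn * fm * gn = hn * fm * gn * en ∧ hn * fm * gn = hn * em * gmInv := by
  have key : hn * fm * gn = hn * gmInv * en := by
    rw [hhf, mul_assoc _ en, heg, ← mul_assoc, hhhg]
  refine ⟨by rw [key, mul_assoc _ en, hee], ?_⟩
  calc hn * fm * gn = hn * gmInv * en := key
    _ = hn * (en * gmInv * en) := by rw [← mul_assoc, ← mul_assoc, hhen]
    _ = hn * (en * em * gmInv) := by rw [hege]
    _ = hn * em * gmInv := by rw [← mul_assoc, ← mul_assoc, hhen]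

/-- In the t-BMW algebra `K_{n+1}`, one has
`h_n f_{n-1} g_n = h_n f_{n-1} g_n e_n = h_n e_{n-1} g_{n-1}⁻¹`. -/
theorem tBMW_reductions2_i {A : Type*} [Ring A]
    (gm gmInv gn hm hn em en fm : A)
    (hgmi : gm * gmInv = 1) (higm : gmInv * gm = 1)
    (hhf : hn * fm = hn * hm * en)
    (heg : en * gn = gn * en)
    (hhhg : hn * hm * gn = hn * gmInv)
    (henh : en * hn = hn) (hhen : hn * en = hn)
    (hege : en * gmInv * en = en * em * gmInv)
    (hee : en * en = en) :
    hn * fm * gn = hn * fm * gn * en ∧ hn * fm * gn = hn * em * gmInv :=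
  tBMW_reductions2_i_general gmInv gn hm hn em en fm hhf heg hhhg hhen hege hee
end

section
/- In the t-BMW algebra K_{n+1}, one has f_n f_{n-1} g_n = f_n f_{n-1} g_n e_n = e_{n-1} h_n e_{n-1} g_{n-1}^{-1}. -/
theorem tBMW_reductions2_iii_general {A : Type*} [Ring A]
    (gmInv gn hm hn em en fm fn : A)
    -- f_n f_{n-1} = e_{n-1} h_n h_{n-1} e_n
    (hff : fn * fm = em * hn * hm * en)
    (heg : en * gn = gn * en)
    -- h_n h_{n-1} g_n = h_n g_{n-1}⁻¹
    (hhhg : hn * hm * gn = hn * gmInv)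
    (hhen : hn * en = hn)
    -- e_n g_{n-1}⁻¹ e_n = e_n e_{n-1} g_{n-1}⁻¹   (from (5.17))
    (hege : en * gmInv * en = en * em * gmInv)
    (hee : en * en = en) :
    fn * fm * gn = fn * fm * gn * en ∧ fn * fm * gn = em * hn * em * gmInv := by
  have key : fn * fm * gn = em * hn * gmInv * en :=
    calc fn * fm * gn = em * (hn * hm * gn) * en := by
          simp only [hff, mul_assoc, heg]
      _ = em * hn * gmInv * en := by rw [hhhg]; simp only [mul_assoc]
  refine ⟨by rw [key, mul_assoc _ en en, hee], ?_⟩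
  -- `h_n = h_n e_n` supplies the left `e_n` needed to apply (5.17).
  calc fn * fm * gn = em * (hn * en) * gmInv * en := by rw [hhen, key]
    _ = em * hn * (en * gmInv * en) := by simp only [mul_assoc]
    _ = em * (hn * en) * em * gmInv := by rw [hege]; simp only [mul_assoc]
    _ = em * hn * em * gmInv := by rw [hhen]

/-- In the t-BMW algebra `K_{n+1}`, one has
`f_n f_{n-1} g_n = f_n f_{n-1} g_n e_n = e_{n-1} h_n e_{n-1} g_{n-1}⁻¹`. -/
theorem tBMW_reductions2_iii {A : Type*} [Ring A]
    (gm gmInv gn hm hn em en fm fn : A)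
    (hgmi : gm * gmInv = 1) (higm : gmInv * gm = 1)
    -- f_n f_{n-1} = e_{n-1} h_n h_{n-1} e_n
    (hff : fn * fm = em * hn * hm * en)
    (heg : en * gn = gn * en)
    -- h_n h_{n-1} g_n = h_n g_{n-1}⁻¹
    (hhhg : hn * hm * gn = hn * gmInv)
    (henh : en * hn = hn) (hhen : hn * en = hn)
    -- e_n g_{n-1}⁻¹ e_n = e_n e_{n-1} g_{n-1}⁻¹   (from (5.17))
    (hege : en * gmInv * en = en * em * gmInv)
    (hee : en * en = en) :
    fn * fm * gn = fn * fm * gn * en ∧ fn * fm * gn = em * hn * em * gmInv :=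
  tBMW_reductions2_iii_general gmInv gn hm hn em en fm fn hff heg hhhg hhen hege hee
end

section
/- In the t-BMW algebra K_{n+1}, one has g_n f_{n-1} h_n = g_n e_n f_{n-1} h_n = g_{n-1}^{-1} e_{n-1} h_n. -/
/-! Both sides reduce to `g_n e_n h_{n-1} h_n`: move `e_n` past `g_n`, apply
`g_n h_{n-1} h_n = g_{n-1}⁻¹ h_n`, and insert `e_n` before `h_n` again so that
`e_n g_{n-1}⁻¹ e_n = g_{n-1}⁻¹ e_{n-1} e_n` applies. -/

section Reductions

variable {S : Type*} [Semigroup S] {gmInv gn hm hn em en fm : S}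

theorem gn_en_hm_hn_eq (heg : en * gn = gn * en) (hghh : gn * hm * hn = gmInv * hn)
    (henh : en * hn = hn) (hege : en * gmInv * en = gmInv * em * en) :
    gn * en * hm * hn = gmInv * em * hn :=
  calc gn * en * hm * hn = en * (gn * hm * hn) := by simp only [← heg, mul_assoc]
    _ = en * gmInv * (en * hn) := by rw [hghh, henh, mul_assoc]
    _ = gmInv * em * hn := by rw [← mul_assoc, hege, mul_assoc _ en, henh]

theorem en_mul_fm_mul_hn (hfh : fm * hn = en * hm * hn) (hee : en * en = en) :
    en * (fm * hn) = fm * hn := by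
  rw [hfh, ← mul_assoc, ← mul_assoc, hee]

end Reductions

theorem tBMW_reductions2_v_general {A : Type*} [Ring A]
    (gmInv gn hm hn em en fm : A)
    -- f_{n-1} h_n = e_n h_{n-1} h_n
    (hfh : fm * hn = en * hm * hn)
    (heg : en * gn = gn * en)
    -- g_n h_{n-1} h_n = g_{n-1}⁻¹ h_n
    (hghh : gn * hm * hn = gmInv * hn)
    (henh : en * hn = hn)
    -- e_n g_{n-1}⁻¹ e_n = g_{n-1}⁻¹ e_{n-1} e_n   (from (5.17))
    (hege : en * gmInv * en = gmInv * em * en)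
    (hee : en * en = en) :
    gn * fm * hn = gmInv * em * hn ∧ gn * en * fm * hn = gmInv * em * hn := by
  have hgf : gn * fm * hn = gmInv * em * hn := by
    rw [mul_assoc, hfh, ← mul_assoc, ← mul_assoc]
    exact gn_en_hm_hn_eq heg hghh henh hege
  refine ⟨hgf, ?_⟩
  rw [mul_assoc, mul_assoc, en_mul_fm_mul_hn hfh hee, ← mul_assoc, hgf]

/-- In the t-BMW algebra `K_{n+1}`, one has
`g_n f_{n-1} h_n = g_n e_n f_{n-1} h_n = g_{n-1}⁻¹ e_{n-1} h_n`. -/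
theorem tBMW_reductions2_v {A : Type*} [Ring A]
    (gm gmInv gn hm hn em en fm : A)
    (hgmi : gm * gmInv = 1) (higm : gmInv * gm = 1)
    -- f_{n-1} h_n = e_n h_{n-1} h_n
    (hfh : fm * hn = en * hm * hn)
    (heg : en * gn = gn * en)
    -- g_n h_{n-1} h_n = g_{n-1}⁻¹ h_n
    (hghh : gn * hm * hn = gmInv * hn)
    (henh : en * hn = hn) (hhen : hn * en = hn)
    -- e_n g_{n-1}⁻¹ e_n = g_{n-1}⁻¹ e_{n-1} e_n   (from (5.17))
    (hege : en * gmInv * en = gmInv * em * en)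
    (hee : en * en = en) :
    gn * fm * hn = gmInv * em * hn ∧ gn * en * fm * hn = gmInv * em * hn :=
  tBMW_reductions2_v_general gmInv gn hm hn em en fm hfh heg hghh henh hege hee
end

section
/- In the t-BMW algebra K_{n+1}, one has g_n e_n g_{n-1} f_n = f_{n-1} g_n g_{n-1} e_{n-1}. -/
/-! Insert `g_n` in front of `f_n` at the cost of a factor `a`; then push `e_n` to the right past
`g_{n-1} g_n`, where it becomes `e_{n-1}`, braid, and move `f_n` left through `e_{n-1}` and then
through `g_n g_{n-1}`, where it becomes `f_{n-1}`. The leftover `g_{n-1} f_{n-1}` returns the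
factor `a⁻¹`. -/

theorem g_e_g_g_f_eq_g_f_g_g_e {M : Type*} [Semigroup M] (gm gn em en fm fn : M)
    (hegg : en * gm * gn = gm * gn * em) (hbraid : gn * gm * gn = gm * gn * gm)
    (hfec : fn * em = em * fn) (hggf : gn * gm * fn = fm * gn * gm) :
    gn * en * gm * (gn * fn) = gm * fm * (gn * gm * em) :=
  calc gn * en * gm * (gn * fn) = gn * (en * gm * gn) * fn := by simp only [mul_assoc]
    _ = gn * gm * gn * (em * fn) := by rw [hegg]; simp only [mul_assoc]
    _ = gm * (gn * gm * fn) * em := by rw [hbraid, ← hfec]; simp only [mul_assoc]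
    _ = gm * fm * (gn * gm * em) := by rw [hggf]; simp only [mul_assoc]

theorem tBMW_L4_vi_general {K A : Type*} [Field K] [Ring A] [Algebra K A]
    (a : K) (ha : a ≠ 0)
    (gm gn em en fm fn : A)
    -- g_n f_n = f_n g_n = a⁻¹ f_n
    (hgf : gn * fn = a⁻¹ • fn)
    -- e_n g_{n-1} g_n = g_{n-1} g_n e_{n-1}
    (hegg : en * gm * gn = gm * gn * em)
    -- braid relation
    (hbraid : gn * gm * gn = gm * gn * gm)
    -- f_n e_{n-1} = e_{n-1} f_n = e_{n-1} h_n e_{n-1}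
    (hfec : fn * em = em * fn)
    -- g_n g_{n-1} f_n = f_{n-1} g_n g_{n-1}   (Lemma 2(ii))
    (hggf : gn * gm * fn = fm * gn * gm)
    -- g_{n-1} f_{n-1} = a⁻¹ f_{n-1}
    (hgfm : gm * fm = a⁻¹ • fm) :
    gn * en * gm * fn = fm * gn * gm * em := by
  have key := g_e_g_g_f_eq_g_f_g_g_e gm gn em en fm fn hegg hbraid hfec hggf
  rw [hgf, hgfm, mul_smul_comm, smul_mul_assoc, ← mul_assoc, ← mul_assoc] at key
  exact smul_right_injective A (inv_ne_zero ha) key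

/-- In the t-BMW algebra `K_{n+1}`, one has
`g_n e_n g_{n-1} f_n = f_{n-1} g_n g_{n-1} e_{n-1}`. -/
theorem tBMW_L4_vi {K A : Type*} [Field K] [Ring A] [Algebra K A]
    (a : K) (ha : a ≠ 0)
    (gm gn hm hn em en fm fn : A)
    -- g_n f_n = f_n g_n = a⁻¹ f_n
    (hgf : gn * fn = a⁻¹ • fn) (hfg : fn * gn = a⁻¹ • fn)
    -- e_n g_{n-1} g_n = g_{n-1} g_n e_{n-1}
    (hegg : en * gm * gn = gm * gn * em)
    -- braid relation
    (hbraid : gn * gm * gn = gm * gn * gm)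
    -- f_n e_{n-1} = e_{n-1} f_n = e_{n-1} h_n e_{n-1}
    (hfe : fn * em = em * hn * em) (hef : em * fn = em * hn * em)
    (hfec : fn * em = em * fn)
    -- g_n g_{n-1} f_n = f_{n-1} g_n g_{n-1}   (Lemma 2(ii))
    (hggf : gn * gm * fn = fm * gn * gm)
    -- g_{n-1} f_{n-1} = a⁻¹ f_{n-1}
    (hgfm : gm * fm = a⁻¹ • fm) :
    gn * en * gm * fn = fm * gn * gm * em :=
  tBMW_L4_vi_general a ha gm gn em en fm fn hgf hegg hbraid hfec hggf hgfm
end
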